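/- arXiv:0907.2578 — 5 statements merged into one kernel-verified Lean document; each statement's English description precedes it below -/
import Mathlib

section
/- For every positive integer N ≥ 2, the 2-adic valuation of H_N − 1 equals −⌊log₂ N⌋. -/
/-- The `n`-th harmonic number `H_n = ∑_{i=1}^n 1/i`, as a rational number. -/
def H (n : ℕ) : ℚ := ∑ i ∈ Finset.range n, (1 : ℚ) / (i + 1)

theorem padicValRat.sub_eq_of_lt {p : ℕ} [Fact p.Prime] {q r : ℚ} (hq : q ≠ 0) (hr : r ≠ 0)
    (hval : padicValRat p q < padicValRat p r) : padicValRat p (q - r) = padicValRat p q := by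
  have hqr : q + -r ≠ 0 := by
    rw [← sub_eq_add_neg, sub_ne_zero]
    rintro rfl
    exact hval.false
  rw [sub_eq_add_neg, padicValRat.add_eq_of_lt hqr hq (neg_ne_zero.mpr hr)
    (by rwa [padicValRat.neg])]

theorem H_eq_harmonic (n : ℕ) : H n = harmonic n := by
  simp [H, harmonic]

theorem v2_harmonic_sub_one (N : ℕ) (hN : 2 ≤ N) :
    padicValRat 2 (H N - 1) = -(Nat.log 2 N : ℤ) := by
  have hlog : 0 < Nat.log 2 N := Nat.log_pos one_lt_two hN
  have hval : padicValRat 2 (harmonic N) < padicValRat 2 1 := by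
    rw [padicValRat_two_harmonic, padicValRat.one]
    omega
  rw [H_eq_harmonic, padicValRat.sub_eq_of_lt (harmonic_pos (by omega)).ne' one_ne_zero hval,
    padicValRat_two_harmonic]
end

section
/- For every prime p ≥ 5 and every positive integer r, the p-adic valuation of H_{rp−1} − H_{rp−p} is at least 2. -/
/-!
Write `r = q + 1`. The difference is `S = ∑_{k=1}^{p-1} 1/(qp+k)`, and pairing `k` with `p - k`
gives `2S = p(2q+1) T` with `T = ∑_{k=1}^{p-1} 1/((qp+k)(qp+p-k))`. Reducing mod `p`, each term
of `T` becomes `-1/k²`, and `∑_{x ∈ 𝔽_p} x⁻² = ∑_{x ∈ 𝔽_p} x² = 0` as soon as `2 < p - 1`.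
Hence `p ∣ T` in `ℤ_[p]`, and `v_p(S) = 1 + v_p(2q+1) + v_p(T) ≥ 2`.
-/

open Finset

theorem H_add_sub_H (n m : ℕ) : H (n + m) - H n = ∑ i ∈ range m, ((n + i + 1 : ℕ) : ℚ)⁻¹ := by
  simp [H, sum_range_add, add_assoc]

theorem Finset.two_mul_sum_inv_eq_of_add_reflect {K : Type*} [Field K] {n : ℕ} {c : K}
    {a : ℕ → K} (ha : ∀ i < n, a i ≠ 0) (hc : ∀ i < n, a i + a (n - 1 - i) = c) :
    2 * ∑ i ∈ range n, (a i)⁻¹ = c * ∑ i ∈ range n, (a i * a (n - 1 - i))⁻¹ := by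
  rw [two_mul]
  nth_rw 2 [← sum_range_reflect]
  rw [← sum_add_distrib, mul_sum]
  refine sum_congr rfl fun i hi => ?_
  have hi := mem_range.1 hi
  rw [inv_add_inv (ha i hi) (ha _ (by omega)), hc i hi, div_eq_mul_inv]

theorem FiniteField.sum_inv_pow_eq_zero {K : Type*} [Field K] [Fintype K] {k : ℕ}
    (hk : k < Fintype.card K - 1) : ∑ x : K, x⁻¹ ^ k = 0 := by
  rw [← FiniteField.sum_pow_lt_card_sub_one K k hk]
  exact Equiv.sum_comp (Equiv.inv K) (· ^ k)

theorem ZMod.sum_range_natCast {M : Type*} [AddCommMonoid M] (n : ℕ) [NeZero n]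
    (f : ZMod n → M) : ∑ i ∈ range n, f i = ∑ x, f x := by
  obtain ⟨n, rfl⟩ := Nat.exists_eq_succ_of_ne_zero (NeZero.ne n)
  rw [← Fin.sum_univ_eq_sum_range]
  exact sum_congr rfl fun x _ => congrArg f (ZMod.natCast_zmod_val (n := n + 1) x)

theorem map_ringInverse {R K F : Type*} [MonoidWithZero R] [DivisionMonoid K] [FunLike F R K]
    [MonoidHomClass F R K] (f : F) {x : R} (hx : IsUnit x) : f (Ring.inverse x) = (f x)⁻¹ := by
  obtain ⟨u, rfl⟩ := hx
  rw [Ring.inverse_unit, map_units_inv]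

theorem block_add_block_reflect (p q : ℕ) {i : ℕ} (hi : i < p - 1) :
    (q * p + i + 1) + (q * p + (p - 1 - 1 - i) + 1) = p * (2 * q + 1) := by
  have : p * (2 * q + 1) = 2 * (q * p) + p := by ring
  omega

section Prime

variable {p : ℕ} [hp : Fact p.Prime]

theorem ZMod.sum_range_inv_succ_pow_eq_zero {k : ℕ} (hk0 : k ≠ 0) (hk : k < p - 1) :
    ∑ i ∈ range (p - 1), ((i + 1 : ZMod p)⁻¹) ^ k = 0 := by
  have hfull := FiniteField.sum_inv_pow_eq_zero (K := ZMod p) (k := k) (by rwa [ZMod.card])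
  have hsplit := sum_range_succ' (fun i : ℕ => ((i : ZMod p))⁻¹ ^ k) (p - 1)
  rw [Nat.sub_add_cancel hp.out.one_le, ZMod.sum_range_natCast p (·⁻¹ ^ k), hfull] at hsplit
  simpa [hk0] using hsplit.symm

theorem coprime_block (q : ℕ) {i : ℕ} (hi : i < p - 1) : p.Coprime (q * p + i + 1) :=
  hp.out.coprime_iff_not_dvd.2 fun hdvd => by
    have : p ∣ i + 1 := (Nat.dvd_add_right (dvd_mul_left p q)).1 (by rwa [add_assoc] at hdvd)
    exact absurd (Nat.le_of_dvd (by omega) this) (by omega)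

theorem sum_inv_block_mul_block_reflect_zmod (hp5 : 5 ≤ p) (q : ℕ) :
    ∑ i ∈ range (p - 1),
      (((q * p + i + 1) * (q * p + (p - 1 - 1 - i) + 1) : ℕ) : ZMod p)⁻¹ = 0 := by
  have hblock : ∀ i, ((q * p + i + 1 : ℕ) : ZMod p) = i + 1 := fun i => by simp
  have hreflect : ∀ i < p - 1, ((q * p + (p - 1 - 1 - i) + 1 : ℕ) : ZMod p) = -(i + 1) :=
    fun i hi => by
      rw [eq_neg_iff_add_eq_zero]
      have := congrArg (Nat.cast : ℕ → ZMod p) (block_add_block_reflect p q hi)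
      simpa [add_comm] using this
  calc _ = ∑ i ∈ range (p - 1), -((i + 1 : ZMod p)⁻¹ ^ 2) := sum_congr rfl fun i hi => by
          rw [Nat.cast_mul, hblock, hreflect i (mem_range.1 hi), mul_neg, ← sq, inv_neg, inv_pow]
    _ = 0 := by
      rw [sum_neg_distrib, ZMod.sum_range_inv_succ_pow_eq_zero two_ne_zero (by omega), neg_zero]

theorem one_le_padicValRat_of_toZMod_eq_zero {x : ℚ} {y : ℤ_[p]} (hxy : (x : ℚ_[p]) = y)
    (hx : x ≠ 0) (hy : PadicInt.toZMod y = 0) : 1 ≤ padicValRat p x := by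
  have hy0 : y ≠ 0 := by rintro rfl; simp_all
  rw [← Padic.valuation_ratCast, hxy, PadicInt.valuation_coe]
  have := (PadicInt.mem_span_pow_iff_le_valuation y hy0 1).1 (by
    rwa [pow_one, ← PadicInt.maximalIdeal_eq_span_p, ← PadicInt.ker_toZMod])
  exact_mod_cast this

theorem one_le_padicValRat_sum_inv {ι : Type*} {s : Finset ι} {b : ι → ℕ}
    (hb : ∀ i ∈ s, p.Coprime (b i)) (hsum : ∑ i ∈ s, (b i : ZMod p)⁻¹ = 0)
    (hne : ∑ i ∈ s, (b i : ℚ)⁻¹ ≠ 0) : 1 ≤ padicValRat p (∑ i ∈ s, (b i : ℚ)⁻¹) := by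
  have hunit : ∀ i ∈ s, IsUnit (b i : ℤ_[p]) := fun i hi =>
    PadicInt.isUnit_iff.2 (PadicInt.norm_natCast_eq_one_iff.2 (hb i hi))
  refine one_le_padicValRat_of_toZMod_eq_zero (y := ∑ i ∈ s, Ring.inverse (b i : ℤ_[p])) ?_ hne ?_
  · rw [PadicInt.coe_sum]
    push_cast
    refine sum_congr rfl fun i hi => ?_
    have h := map_ringInverse PadicInt.Coe.ringHom (hunit i hi)
    rw [map_natCast] at h
    exact h.symm
  · rw [map_sum, ← hsum]
    refine sum_congr rfl fun i hi => ?_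
    rw [map_ringInverse _ (hunit i hi), map_natCast]

theorem padicValRat_two_mul (hp2 : p ≠ 2) {x : ℚ} (hx : x ≠ 0) :
    padicValRat p (2 * x) = padicValRat p x := by
  have h2 : padicValRat p 2 = 0 := by
    have := padicValRat.of_nat (p := p) (n := 2)
    rwa [padicValNat_primes hp2, Nat.cast_ofNat, Nat.cast_zero] at this
  rw [padicValRat.mul two_ne_zero hx, h2, zero_add]

theorem two_le_padicValRat_sum_inv_block (hp5 : 5 ≤ p) (q : ℕ) :
    2 ≤ padicValRat p (∑ i ∈ range (p - 1), ((q * p + i + 1 : ℕ) : ℚ)⁻¹) := by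
  set S := ∑ i ∈ range (p - 1), ((q * p + i + 1 : ℕ) : ℚ)⁻¹
  set T := ∑ i ∈ range (p - 1), (((q * p + i + 1) * (q * p + (p - 1 - 1 - i) + 1) : ℕ) : ℚ)⁻¹
  have hpair : 2 * S = ((p * (2 * q + 1) : ℕ) : ℚ) * T := by
    push_cast [S, T]
    refine two_mul_sum_inv_eq_of_add_reflect (fun i _ => by positivity) fun i hi => ?_
    exact_mod_cast block_add_block_reflect p q hi
  have hne : (range (p - 1)).Nonempty := nonempty_range_iff.2 (by omega)
  have hS : 0 < S := sum_pos (fun i _ => by positivity) hne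
  have hT : 0 < T := sum_pos (fun i _ => by positivity) hne
  have hvT : 1 ≤ padicValRat p T :=
    one_le_padicValRat_sum_inv
      (fun i hi => (coprime_block q (mem_range.1 hi)).mul_right (coprime_block q (by omega)))
      (sum_inv_block_mul_block_reflect_zmod hp5 q) hT.ne'
  have hvpq : 1 ≤ padicValRat p ((p * (2 * q + 1) : ℕ) : ℚ) := by
    rw [padicValRat.of_nat]
    exact_mod_cast one_le_padicValNat_of_dvd (by positivity) (dvd_mul_right p _)
  calc (2 : ℤ) ≤ padicValRat p ((p * (2 * q + 1) : ℕ) : ℚ) + padicValRat p T := by omega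
    _ = padicValRat p (2 * S) := by rw [hpair, padicValRat.mul (by positivity) hT.ne']
    _ = padicValRat p S := padicValRat_two_mul (by omega) hS.ne'

end Prime

theorem wolstenholme_general (p r : ℕ) (hp : p.Prime) (hp5 : 5 ≤ p) (hr : 1 ≤ r) :
    2 ≤ padicValRat p (H (r * p - 1) - H (r * p - p)) := by
  have := Fact.mk hp
  obtain ⟨q, rfl⟩ : ∃ q, r = q + 1 := ⟨r - 1, by omega⟩
  have hlo : (q + 1) * p - p = q * p := by rw [add_one_mul, Nat.add_sub_cancel]
  have hhi : (q + 1) * p - 1 = q * p + (p - 1) := by rw [add_one_mul]; omega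
  rw [hhi, hlo, H_add_sub_H]
  exact two_le_padicValRat_sum_inv_block hp5 q
end

section
/- For every positive integer J divisible by 3, we have 3H_J ≡ H_{J/3} modulo 9ℤ_3, i.e. v₃(3H_J − H_{J/3}) ≥ 2. -/
open Finset

namespace padicValRat

variable {p : ℕ} [Fact p.Prime]

theorem nonneg_add {q r : ℚ} (hq : 0 ≤ padicValRat p q) (hr : 0 ≤ padicValRat p r) :
    0 ≤ padicValRat p (q + r) := by
  by_cases hqr : q + r = 0
  · simp [hqr] -- `padicValRat p 0 = 0`
  · exact (le_min hq hr).trans (min_le_padicValRat_add hqr)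

theorem nonneg_sum {ι : Type*} {s : Finset ι} {F : ι → ℚ}
    (hF : ∀ i ∈ s, 0 ≤ padicValRat p (F i)) : 0 ≤ padicValRat p (∑ i ∈ s, F i) := by
  classical
  induction s using Finset.induction_on with
  | empty => simp
  | insert a s ha ih =>
    rw [sum_insert ha]
    exact nonneg_add (hF a (mem_insert_self a s))
      (ih fun i hi => hF i (mem_insert_of_mem hi))

theorem nonneg_natCast_div {n m : ℕ} (hm : ¬p ∣ m) : 0 ≤ padicValRat p (n / m) := by
  rcases eq_or_ne n 0 with rfl | hn
  · simp
  have hm0 : m ≠ 0 := by rintro rfl; exact hm (dvd_zero p)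
  rw [padicValRat.div (by exact_mod_cast hn) (by exact_mod_cast hm0), padicValRat.of_nat,
    padicValRat.of_nat, padicValNat.eq_zero_of_not_dvd hm]
  simp

end padicValRat

theorem three_mul_H_three_mul_sub_H (S : ℕ) :
    3 * H (3 * S) - H S =
      9 * ∑ k ∈ range S, ((2 * k + 1 : ℕ) : ℚ) / ((3 * k + 1) * (3 * k + 2) : ℕ) := by
  induction S with
  | zero => simp [H]
  | succ S ih =>
    rw [show 3 * (S + 1) = 3 * S + 1 + 1 + 1 by ring, sum_range_succ, mul_add, ← ih]
    simp only [H, sum_range_succ]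
    push_cast
    field_simp
    ring

theorem three_mul_harmonic_congr (J : ℕ) (hJ : 1 ≤ J) (hdvd : 3 ∣ J) :
    2 ≤ padicValRat 3 ((3 : ℚ) * H J - H (J / 3)) := by
  have : Fact (Nat.Prime 3) := ⟨Nat.prime_three⟩
  obtain ⟨S, rfl⟩ := hdvd
  set F : ℕ → ℚ := fun k => ((2 * k + 1 : ℕ) : ℚ) / ((3 * k + 1) * (3 * k + 2) : ℕ)
  have hF_pos : 0 < ∑ k ∈ range S, F k :=
    sum_pos (fun _ _ => by positivity) (nonempty_range_iff.mpr (by omega))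
  have hF_val : 0 ≤ padicValRat 3 (∑ k ∈ range S, F k) :=
    padicValRat.nonneg_sum fun _ _ =>
      padicValRat.nonneg_natCast_div (Nat.prime_three.dvd_mul.not.mpr (by omega))
  have h9 : padicValRat 3 9 = 2 := by
    rw [show (9 : ℚ) = ((3 ^ 2 : ℕ) : ℚ) by norm_num, padicValRat.of_nat,
      padicValNat.prime_pow]
    rfl
  rw [Nat.mul_div_cancel_left S three_pos, three_mul_H_three_mul_sub_H,
    padicValRat.mul (by norm_num) hF_pos.ne', h9]
  omega
end

section
/- For every prime p ≥ 5 and every positive integer N, the congruence pH_{pN} ≡ H_N modulo p⁴ℤ_p (i.e. v_p(pH_{pN} − H_N) ≥ 4) holds if and only if v_p(H_{p−1}) ≥ 3 or p divides N. -/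
/-!
Sorting the terms of `H (p * N)` by their residue mod `p` gives
`p H_{pN} - H_N = p ∑_{j<N} ∑_{r=1}^{p-1} 1/(jp + r)`. Expand
`1/(jp + r) = 1/r - jp/r² + j²p²/r³ - p³ j³/(r³(jp + r))` and write
`S_k = ∑_{r=1}^{p-1} r⁻ᵏ`. The case `j = -1` summed against the reflection `r ↦ p - r` gives
`2 S₁ = -p S₂ - p² S₃ + O(p³)`, and `S_k ≡ 0 (mod p)` for `0 < k < p - 1` because
`r ↦ r⁻¹` permutes `(ℤ/p)ˣ`. Together these give
`p H_{pN} - H_N ≡ p N² H_{p-1} (mod p⁴)`, whose right side has valuation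
`1 + 2 v_p(N) + v_p(H_{p-1})` with `v_p(H_{p-1}) ≥ 1`.
-/

open Finset

lemma sum_range_natCast_eq_sum_zmod {M : Type*} [AddCommMonoid M] (n : ℕ) [NeZero n]
    (f : ZMod n → M) : ∑ r ∈ range n, f r = ∑ x : ZMod n, f x :=
  sum_nbij' (↑) ZMod.val (fun _ _ ↦ mem_univ _) (fun x _ ↦ mem_range.2 (ZMod.val_lt x))
    (fun _ hr ↦ ZMod.val_cast_of_lt (mem_range.1 hr)) (fun x _ ↦ ZMod.natCast_zmod_val x)
    (fun _ _ ↦ rfl)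

lemma sum_range_inv_pow_eq_zero {p k : ℕ} [Fact p.Prime] (hk : 0 < k) (hkp : k < p - 1) :
    ∑ r ∈ range (p - 1), ((r + 1 : ℕ) : ZMod p)⁻¹ ^ k = 0 := by
  have hp : 1 ≤ p := (Fact.out : p.Prime).one_le
  calc ∑ r ∈ range (p - 1), ((r + 1 : ℕ) : ZMod p)⁻¹ ^ k
      = ∑ r ∈ range p, ((r : ℕ) : ZMod p)⁻¹ ^ k := by
        rw [show range p = range (p - 1 + 1) by rw [Nat.sub_add_cancel hp], sum_range_succ']
        simp [hk.ne']
    _ = ∑ x : ZMod p, x⁻¹ ^ k := sum_range_natCast_eq_sum_zmod p (fun x ↦ x⁻¹ ^ k)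
    _ = ∑ x : ZMod p, x ^ k := Fintype.sum_equiv (Equiv.inv _) _ _ (fun _ ↦ rfl)
    _ = 0 := FiniteField.sum_pow_lt_card_sub_one _ k (by rwa [ZMod.card])

lemma natCast_sum_prod_erase_pow {ι K : Type*} [DecidableEq ι] [Field K] (s : Finset ι)
    (a : ι → ℕ) (k : ℕ) (ha : ∀ i ∈ s, (a i : K) ≠ 0) :
    ((∑ i ∈ s, (∏ j ∈ s.erase i, a j) ^ k : ℕ) : K) =
      (∏ i ∈ s, (a i : K)) ^ k * ∑ i ∈ s, (a i : K)⁻¹ ^ k := by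
  push_cast
  rw [mul_sum]
  refine sum_congr rfl fun i hi ↦ ?_
  rw [← mul_prod_erase s (fun j ↦ (a j : K)) hi, mul_pow, mul_right_comm, ← mul_pow,
    mul_inv_cancel₀ (ha i hi), one_pow, one_mul]

lemma padicNorm_sum_inv_pow_le {p : ℕ} [Fact p.Prime] {ι : Type*} (s : Finset ι)
    (a : ι → ℕ) (k : ℕ) (ha : ∀ i ∈ s, ¬ p ∣ a i) (hsum : ∑ i ∈ s, ((a i : ZMod p))⁻¹ ^ k = 0) :
    padicNorm p (∑ i ∈ s, ((a i : ℚ))⁻¹ ^ k) ≤ p ^ (-1 : ℤ) := by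
  classical
  set A := ∑ i ∈ s, (∏ j ∈ s.erase i, a j) ^ k
  have hA : p ∣ A := by
    rw [← ZMod.natCast_eq_zero_iff, natCast_sum_prod_erase_pow s a k
      (fun i hi ↦ by rw [Ne, ZMod.natCast_eq_zero_iff]; exact ha i hi), hsum, mul_zero]
  have hprod : ¬ p ∣ (∏ i ∈ s, a i) ^ k := fun h ↦
    have ⟨i, hi, hpi⟩ := (Prime.dvd_finsetProd_iff (Fact.out : p.Prime).prime _).1
      ((Fact.out : p.Prime).dvd_of_dvd_pow h)
    ha i hi hpi
  have hAq : (A : ℚ) = ((∏ i ∈ s, a i) ^ k : ℕ) * ∑ i ∈ s, ((a i : ℚ))⁻¹ ^ k := by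
    rw [natCast_sum_prod_erase_pow s a k]
    · push_cast; rfl
    · intro i hi; exact Nat.cast_ne_zero.2 fun h ↦ ha i hi (h ▸ dvd_zero p)
  have hnorm := padicNorm.dvd_iff_norm_le (p := p) (n := 1) (z := A) |>.1
    (by simpa using Int.natCast_dvd_natCast.2 hA)
  rwa [Int.cast_natCast, hAq, padicNorm.mul, (padicNorm.nat_eq_one_iff _).2 hprod, one_mul]
    at hnorm

def invPowerSum (p k : ℕ) : ℚ := ∑ r ∈ range (p - 1), ((r : ℚ) + 1)⁻¹ ^ k

def blockSum (p : ℕ) (x : ℤ) : ℚ := ∑ r ∈ range (p - 1), ((x : ℚ) * p + r + 1)⁻¹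

def blockRemainder (p : ℕ) (x : ℤ) : ℚ :=
  ∑ r ∈ range (p - 1), (x : ℚ) ^ 3 / (((r : ℚ) + 1) ^ 3 * ((x : ℚ) * p + r + 1))

lemma intCast_mul_add_ne_zero {p r : ℕ} (x : ℤ) (hr : r + 1 < p) :
    (x : ℚ) * p + r + 1 ≠ 0 := by
  have hr' : (r : ℚ) + 1 < p := by exact_mod_cast hr
  rcases le_or_gt 0 x with hx | hx
  · have : (0 : ℚ) ≤ x := by exact_mod_cast hx
    positivity
  · have : (x : ℚ) ≤ -1 := by exact_mod_cast Int.le_sub_one_of_lt hx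
    nlinarith

lemma blockSum_eq (p : ℕ) (x : ℤ) :
    blockSum p x = invPowerSum p 1 - x * p * invPowerSum p 2 + x ^ 2 * p ^ 2 * invPowerSum p 3
      - p ^ 3 * blockRemainder p x := by
  simp only [blockSum, invPowerSum, blockRemainder, mul_sum, ← sum_sub_distrib,
    ← sum_add_distrib]
  refine sum_congr rfl fun r hr ↦ ?_
  have := intCast_mul_add_ne_zero (p := p) x (r := r) (by have := mem_range.1 hr; omega)
  field_simp
  ring

lemma blockSum_neg_one (p : ℕ) : blockSum p (-1) = -invPowerSum p 1 := by
  rw [blockSum, invPowerSum, ← sum_range_reflect, ← sum_neg_distrib]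
  refine sum_congr rfl fun r hr ↦ ?_
  have hcast : ((p - 1 - 1 - r : ℕ) : ℚ) + r + 2 = p := by
    exact_mod_cast (by have := mem_range.1 hr; omega : p - 1 - 1 - r + r + 2 = p)
  rw [pow_one, ← inv_neg, neg_add', Int.cast_neg, Int.cast_one]
  congr 1
  linarith

lemma two_mul_invPowerSum_one (p : ℕ) :
    2 * invPowerSum p 1 = -p * invPowerSum p 2 - p ^ 2 * invPowerSum p 3
      + p ^ 3 * blockRemainder p (-1) := by
  have := blockSum_eq p (-1)
  rw [blockSum_neg_one] at this
  push_cast at this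
  linear_combination -this

lemma natCast_mul_H_mul_sub_H (p N : ℕ) (hp : p ≠ 0) :
    p * H (p * N) - H N = p * ∑ j ∈ range N, blockSum p j := by
  induction N with
  | zero => simp [H]
  | succ n ih =>
    have hblock : H (p * (n + 1)) = H (p * n) + blockSum p n + 1 / (p * (n + 1)) := by
      rw [show p * (n + 1) = p * n + (p - 1) + 1 by grind, H, sum_range_succ, sum_range_add,
        ← H, blockSum]
      congr 2
      · refine sum_congr rfl fun r _ ↦ ?_
        push_cast; ring_nf
      · push_cast [Nat.cast_sub (Nat.one_le_iff_ne_zero.2 hp)]; ring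
    have hp' : (p : ℚ) ≠ 0 := by exact_mod_cast hp
    have hsucc : H (n + 1) = H n + 1 / (n + 1) := by simp [H, sum_range_succ]
    have hcancel : (p : ℚ) * (1 / (p * (n + 1))) = 1 / (n + 1) := by field_simp
    rw [hblock, hsucc, sum_range_succ]
    linear_combination ih + hcancel

lemma sum_blockSum_eq (p N : ℕ) :
    ∑ j ∈ range N, blockSum p j = N * invPowerSum p 1
      - p * (∑ j ∈ range N, j : ℕ) * invPowerSum p 2
      + p ^ 2 * (∑ j ∈ range N, j ^ 2 : ℕ) * invPowerSum p 3
      - p ^ 3 * ∑ j ∈ range N, blockRemainder p j := by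
  simp only [blockSum_eq, sum_sub_distrib, sum_add_distrib, ← sum_mul, ← mul_sum, sum_const,
    card_range, nsmul_eq_mul]
  push_cast
  ring

lemma natCast_mul_H_mul_sub_H_sub_eq (p N : ℕ) (hp : p ≠ 0) :
    p * H (p * N) - H N - p * N ^ 2 * invPowerSum p 1 =
      p ^ 3 * ((∑ j ∈ range N, (j + j ^ 2) : ℕ) * invPowerSum p 3)
        - p ^ 4 * ((∑ j ∈ range N, j : ℕ) * blockRemainder p (-1)
          + ∑ j ∈ range N, blockRemainder p j) := by
  have hgauss : ((∑ j ∈ range N, j : ℕ) : ℚ) * 2 = N ^ 2 - N := by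
    rw [← Nat.cast_two, ← Nat.cast_mul, sum_range_id_mul_two]
    cases N <;> push_cast <;> ring
  rw [natCast_mul_H_mul_sub_H p N hp, sum_blockSum_eq, sum_add_distrib, Nat.cast_add]
  linear_combination (-(p : ℚ) * (∑ j ∈ range N, j : ℕ)) * two_mul_invPowerSum_one p
    + (p : ℚ) * invPowerSum p 1 * hgauss

lemma invPowerSum_pos {p : ℕ} (hp : 2 ≤ p) (k : ℕ) : 0 < invPowerSum p k :=
  sum_pos (fun _ _ ↦ by positivity) (nonempty_range_iff.2 (by omega))

lemma blockSum_pos {p : ℕ} (hp : 2 ≤ p) (j : ℕ) : 0 < blockSum p j :=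
  sum_pos (fun _ _ ↦ by push_cast; positivity) (nonempty_range_iff.2 (by omega))

section

open IsAbsoluteValue

variable {p : ℕ} [Fact p.Prime]

lemma padicNorm_intCast_mul_add_eq_one (x : ℤ) {r : ℕ} (hr : r + 1 < p) :
    padicNorm p ((x : ℚ) * p + r + 1) = 1 := by
  have hndvd : ¬ (p : ℤ) ∣ x * p + (r + 1 : ℕ) := by
    rw [dvd_add_right (dvd_mul_left _ _)]
    exact_mod_cast Nat.not_dvd_of_pos_of_lt r.succ_pos hr
  have := (padicNorm.int_eq_one_iff _).2 hndvd
  push_cast at this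
  rwa [add_assoc]

lemma padicNorm_blockRemainder_le_one (x : ℤ) : padicNorm p (blockRemainder p x) ≤ 1 := by
  refine padicNorm.sum_le' (fun r hr ↦ ?_) zero_le_one
  have hr : r + 1 < p := by have := mem_range.1 hr; omega
  have hr1 := padicNorm_intCast_mul_add_eq_one 0 hr
  rw [Int.cast_zero, zero_mul, zero_add] at hr1
  rw [padicNorm.div, padicNorm.mul, abv_pow (padicNorm p), abv_pow (padicNorm p), hr1,
    padicNorm_intCast_mul_add_eq_one x hr, one_pow, one_mul, div_one]
  exact pow_le_one₀ (padicNorm.nonneg _) (padicNorm.of_int x)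

lemma padicNorm_invPowerSum_le {k : ℕ} (hk : 0 < k) (hkp : k < p - 1) :
    padicNorm p (invPowerSum p k) ≤ p ^ (-1 : ℤ) := by
  have := padicNorm_sum_inv_pow_le (range (p - 1)) (· + 1) k
    (fun r hr ↦ Nat.not_dvd_of_pos_of_lt r.succ_pos (by have := mem_range.1 hr; omega))
    (sum_range_inv_pow_eq_zero hk hkp)
  simpa [invPowerSum] using this

lemma padicNorm_natCast_pow_mul_le {x : ℚ} {m : ℤ} (hx : padicNorm p x ≤ p ^ (-m)) (n : ℕ) :
    padicNorm p (p ^ n * x) ≤ p ^ (-(n + m)) := by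
  have hp : (0 : ℚ) < p := by exact_mod_cast (Fact.out : p.Prime).pos
  rw [padicNorm.mul, abv_pow (padicNorm p), padicNorm.padicNorm_p_of_prime, neg_add,
    zpow_add₀ hp.ne', inv_pow, ← zpow_natCast, ← zpow_neg]
  exact mul_le_mul_of_nonneg_left hx (by positivity)

lemma padicNorm_natCast_mul_le (a : ℕ) (x : ℚ) : padicNorm p (a * x) ≤ padicNorm p x := by
  rw [padicNorm.mul]
  exact mul_le_of_le_one_left (padicNorm.nonneg _) (padicNorm.of_nat a)

lemma padicNorm_natCast_mul_H_mul_sub_H_sub_le (hp5 : 5 ≤ p) (N : ℕ) :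
    padicNorm p (p * H (p * N) - H N - p * N ^ 2 * invPowerSum p 1) ≤ p ^ (-4 : ℤ) := by
  rw [natCast_mul_H_mul_sub_H_sub_eq p N (Fact.out : p.Prime).ne_zero]
  have hS3 :
      padicNorm p ((∑ j ∈ range N, (j + j ^ 2) : ℕ) * invPowerSum p 3) ≤ p ^ (-1 : ℤ) :=
    (padicNorm_natCast_mul_le _ _).trans (padicNorm_invPowerSum_le (by norm_num) (by omega))
  have hR : padicNorm p ((∑ j ∈ range N, j : ℕ) * blockRemainder p (-1)
      + ∑ j ∈ range N, blockRemainder p j) ≤ 1 :=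
    padicNorm.nonarchimedean.trans <| max_le
      ((padicNorm_natCast_mul_le _ _).trans (padicNorm_blockRemainder_le_one _))
      (padicNorm.sum_le' (fun j _ ↦ padicNorm_blockRemainder_le_one _) zero_le_one)
  refine padicNorm.sub.trans (max_le ?_ ?_)
  · simpa using padicNorm_natCast_pow_mul_le hS3 3
  · simpa only [Nat.cast_ofNat, add_zero] using
      padicNorm_natCast_pow_mul_le (m := 0) (by rwa [neg_zero, zpow_zero]) 4

lemma le_padicValRat_iff_padicNorm_le {x : ℚ} (hx : x ≠ 0) (n : ℤ) :
    n ≤ padicValRat p x ↔ padicNorm p x ≤ p ^ (-n) := by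
  rw [padicNorm.eq_zpow_of_nonzero hx,
    zpow_le_zpow_iff_right₀ (by exact_mod_cast (Fact.out : p.Prime).one_lt), neg_le_neg_iff]

lemma le_padicValRat_iff_of_padicNorm_sub_le {x y : ℚ} (hx : x ≠ 0) (hy : y ≠ 0) {n : ℤ}
    (h : padicNorm p (x - y) ≤ p ^ (-n)) : n ≤ padicValRat p x ↔ n ≤ padicValRat p y := by
  rw [le_padicValRat_iff_padicNorm_le hx, le_padicValRat_iff_padicNorm_le hy]
  constructor
  · intro hx'
    calc padicNorm p y = padicNorm p (x - (x - y)) := by rw [sub_sub_cancel]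
      _ ≤ _ := padicNorm.sub.trans (max_le hx' h)
  · intro hy'
    calc padicNorm p x = padicNorm p (y + (x - y)) := by rw [add_sub_cancel]
      _ ≤ _ := padicNorm.nonarchimedean.trans (max_le hy' h)

end

theorem p_mul_harmonic_congr_fourth_iff (p N : ℕ) (hp : p.Prime) (hp5 : 5 ≤ p)
    (hN : 1 ≤ N) :
    4 ≤ padicValRat p ((p : ℚ) * H (p * N) - H N) ↔
      3 ≤ padicValRat p (H (p - 1)) ∨ p ∣ N := by
  have := Fact.mk hp
  have hN0 : N ≠ 0 := by omega
  have hS1 : H (p - 1) = invPowerSum p 1 := by simp [H, invPowerSum]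
  have hS1_pos := invPowerSum_pos hp.two_le 1
  have hS1_val : 1 ≤ padicValRat p (invPowerSum p 1) :=
    (le_padicValRat_iff_padicNorm_le hS1_pos.ne' 1).2 (padicNorm_invPowerSum_le one_pos (by omega))
  have hD_pos : 0 < (p : ℚ) * H (p * N) - H N := by
    rw [natCast_mul_H_mul_sub_H p N hp.ne_zero]
    exact mul_pos (by exact_mod_cast hp.pos)
      (sum_pos (fun j _ ↦ blockSum_pos hp.two_le j) (nonempty_range_iff.2 hN0))
  have hval : padicValRat p ((p : ℚ) * N ^ 2 * invPowerSum p 1) =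
      1 + 2 * padicValNat p N + padicValRat p (invPowerSum p 1) := by
    have hp0 : (p : ℚ) ≠ 0 := by exact_mod_cast hp.ne_zero
    rw [padicValRat.mul (by positivity) hS1_pos.ne', padicValRat.mul hp0 (by positivity),
      padicValRat.pow, padicValRat.self hp.one_lt, padicValRat.of_nat]
    ring
  have hdvd : p ∣ N ↔ 1 ≤ padicValNat p N := by
    rw [dvd_iff_padicValNat_ne_zero hN0]; omega
  rw [le_padicValRat_iff_of_padicNorm_sub_le hD_pos.ne' (by positivity)
    (padicNorm_natCast_mul_H_mul_sub_H_sub_le hp5 N), hval, hS1, hdvd]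
  omega
end

section
/- For every prime p ≥ 5, we have H_{p−1} ≡ −(p/2)·H_{p−1}^{(2)} modulo p³ℤ_p, where H_m^{(2)} = ∑_{n=1}^m 1/n². -/
/-!
Pair the term of index `n` with that of index `p - n`: since `n + (p - n) = p`,
`1/n + (p/2)/n² + 1/(p-n) + (p/2)/(p-n)² = p³ / (2 n² (p-n)²)`.
Hence the left-hand side is `p³` times a sum of rationals whose denominators `4 n² (p-n)²`
are prime to the odd prime `p`.
-/

open Finset

lemma one_div_add_one_div_sq_pair_eq {K : Type*} [Field K] [CharZero K] {n m : K}
    (hn : n ≠ 0) (hm : m ≠ 0) :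
    (1 / n + (n + m) / 2 * (1 / n ^ 2)) + (1 / m + (n + m) / 2 * (1 / m ^ 2))
      = 2 * (n + m) ^ 3 * (1 / (4 * n ^ 2 * m ^ 2)) := by
  field_simp
  ring

lemma H_add_half_mul_sum_inv_sq_eq_pow_three_mul (p : ℕ) :
    H (p - 1) + ((p : ℚ) / 2) * ∑ n ∈ range (p - 1), (1 : ℚ) / ((n : ℚ) + 1) ^ 2
      = (p : ℚ) ^ 3 * ∑ i ∈ range (p - 1), 1 / ((4 * (i + 1) ^ 2 * (p - 1 - i) ^ 2 : ℕ) : ℚ) := by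
  set f : ℕ → ℚ := fun i => 1 / ((i : ℚ) + 1) + (p : ℚ) / 2 * (1 / ((i : ℚ) + 1) ^ 2)
  have hf : H (p - 1) + ((p : ℚ) / 2) * ∑ n ∈ range (p - 1), (1 : ℚ) / ((n : ℚ) + 1) ^ 2
      = ∑ i ∈ range (p - 1), f i := by
    rw [H, mul_sum, ← sum_add_distrib]
  rw [hf]
  refine mul_left_cancel₀ (two_ne_zero (α := ℚ)) ?_
  calc 2 * ∑ i ∈ range (p - 1), f i
      = ∑ i ∈ range (p - 1), (f i + f (p - 1 - 1 - i)) := by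
        conv_rhs => rw [sum_add_distrib, sum_range_reflect f]
        rw [two_mul]
    _ = 2 * ((p : ℚ) ^ 3 * ∑ i ∈ range (p - 1),
          1 / ((4 * (i + 1) ^ 2 * (p - 1 - i) ^ 2 : ℕ) : ℚ)) := by
        rw [mul_sum, mul_sum]
        refine sum_congr rfl fun i hi => ?_
        have hi : i + 1 < p := by rw [mem_range] at hi; omega
        have hrefl : ((p - 1 - 1 - i : ℕ) : ℚ) + 1 = ((p - 1 - i : ℕ) : ℚ) := by
          rw [← Nat.cast_add_one]; congr 1; omega
        have hsum : ((i : ℚ) + 1) + ((p - 1 - i : ℕ) : ℚ) = p := by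
          rw [← Nat.cast_add_one, ← Nat.cast_add]; congr 1; omega
        have hm : ((p - 1 - i : ℕ) : ℚ) ≠ 0 := by rw [Nat.cast_ne_zero]; omega
        simp only [f, hrefl]
        rw [← hsum, one_div_add_one_div_sq_pair_eq (by positivity) hm]
        push_cast
        ring

lemma padicNorm_one_div_natCast {p k : ℕ} [Fact p.Prime] (hk : ¬p ∣ k) :
    padicNorm p (1 / (k : ℚ)) = 1 := by
  rw [padicNorm.div, padicNorm.one, (padicNorm.nat_eq_one_iff k).2 hk, div_one]

lemma padicNorm_sum_one_div_pair_sq_le_one {p : ℕ} [Fact p.Prime] (hp2 : p ≠ 2) :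
    padicNorm p (∑ i ∈ range (p - 1), 1 / ((4 * (i + 1) ^ 2 * (p - 1 - i) ^ 2 : ℕ) : ℚ)) ≤ 1 := by
  have hp := (Fact.out : p.Prime)
  refine padicNorm.sum_le' (fun i hi => le_of_eq (padicNorm_one_div_natCast ?_)) zero_le_one
  rw [mem_range] at hi
  rw [← hp.coprime_iff_not_dvd]
  refine Nat.Coprime.mul_right (Nat.Coprime.mul_right ?_ ?_) ?_
  · exact (Nat.coprime_primes hp Nat.prime_two).2 hp2 |>.pow_right 2
  · exact (Nat.coprime_of_lt_prime (by omega) (by omega) hp).pow_right 2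
  · exact (Nat.coprime_of_lt_prime (by omega) (by omega) hp).pow_right 2

theorem harmonic_congr_second_order (p : ℕ) (hp : p.Prime) (hp5 : 5 ≤ p) :
    padicNorm p (H (p - 1) + ((p : ℚ) / 2) * ∑ n ∈ Finset.range (p - 1), (1 : ℚ) / ((n : ℚ) + 1) ^ 2)
      ≤ (p : ℚ) ^ (-3 : ℤ) := by
  have : Fact p.Prime := ⟨hp⟩
  rw [H_add_half_mul_sum_inv_sq_eq_pow_three_mul, padicNorm.mul,
    IsAbsoluteValue.abv_pow (padicNorm p), padicNorm.padicNorm_p_of_prime]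
  calc (p : ℚ)⁻¹ ^ 3 * padicNorm p _ ≤ (p : ℚ)⁻¹ ^ 3 * 1 :=
        mul_le_mul_of_nonneg_left (padicNorm_sum_one_div_pair_sq_le_one (by omega)) (by positivity)
    _ = (p : ℚ) ^ (-3 : ℤ) := by simp [zpow_neg]
end
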